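/- arXiv:1205.3710 — 2 statements merged into one kernel-verified Lean document; each statement's English description precedes it below -/
import Mathlib

section
/- For any matrices A, B, the symmetric (Strang) splitting satisfies [exp(A/(2N))·exp(B/N)·exp(A/(2N))]^N = exp(A + B + E_N) with |E_N| = O(1/N²); equivalently, the symmetric product converges to exp(A+B) with error O(1/N²). -/
attribute [local instance] Matrix.linftyOpNormedRing Matrix.linftyOpNormedAlgebra

/-!
Put `x = A/(2N)` and `y = B/N`, so that `2x + y = (A + B)/N`. Expanding `exp` to second order,
`exp x * exp y * exp x` and `exp (2x + y)` agree up to `O(1/N³)`: the symmetric arrangement makes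
the second-order terms `2x² + xy + yx + y²/2` coincide. A logarithm near `1` is supplied by the
inverse function theorem; having a strict derivative at `1`, it is locally Lipschitz, so the
logarithm of the symmetric product is `(A + B)/N + O(1/N³)`. Hence `E_N = N log(product) - (A + B)`
is `O(1/N²)`, and `product ^ N = exp (N log(product)) = exp (A + B + E_N)`.
-/

open Filter Asymptotics Topology NormedSpace Finset Nat

theorem isBigO_mul_sub_mul {α R : Type*} [SeminormedRing R] {l : Filter α}
    {u u' v v' : α → R} {g : α → ℝ}
    (hu : (fun i => u i - u' i) =O[l] fun i => g i ^ 2)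
    (hv : (fun i => v i - v' i) =O[l] fun i => g i ^ 2) (hv' : v =O[l] g) (hu' : u' =O[l] g) :
    (fun i => u i * v i - u' i * v' i) =O[l] fun i => g i ^ 3 := by
  have h := (hu.mul hv').add ((hu'.mul hv).congr_right fun i => mul_comm (g i) _)
  refine h.congr (fun i => ?_) (fun i => ?_)
  · noncomm_ring
  · ring

theorem isBigO_inv_natCast_smul (𝕂 : Type*) [RCLike 𝕂] {E : Type*} [SeminormedAddCommGroup E]
    [NormedSpace 𝕂 E] (v : E) :
    (fun N : ℕ => (N : 𝕂)⁻¹ • v) =O[atTop] fun N => (N : ℝ)⁻¹ :=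
  IsBigO.of_bound ‖v‖ (Eventually.of_forall fun N => by
    rw [norm_smul, norm_inv, RCLike.norm_natCast, Real.norm_eq_abs, abs_inv, Nat.abs_cast,
      mul_comm])

section BanachAlgebra

variable {α 𝔸 : Type*} [NormedRing 𝔸]

section StrangProduct

variable (𝕂 : Type*) [RCLike 𝕂] [NormedAlgebra 𝕂 𝔸] (A B : 𝔸)

noncomputable def strangProduct (N : ℕ) : 𝔸 :=
  exp ((2 * (N : 𝕂))⁻¹ • A) * exp ((N : 𝕂)⁻¹ • B) * exp ((2 * (N : 𝕂))⁻¹ • A)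

theorem strangProduct_eq (N : ℕ) :
    strangProduct 𝕂 A B N =
      exp ((N : 𝕂)⁻¹ • (2 : 𝕂)⁻¹ • A) * exp ((N : 𝕂)⁻¹ • B) * exp ((N : 𝕂)⁻¹ • (2 : 𝕂)⁻¹ • A) := by
  rw [strangProduct, smul_smul, mul_inv, mul_comm]

end StrangProduct

variable [CompleteSpace 𝔸]

theorem tendsto_exp_nhds_zero_one (𝕂 : Type*) [RCLike 𝕂] [NormedAlgebra 𝕂 𝔸] :
    Tendsto (exp : 𝔸 → 𝔸) (𝓝 0) (𝓝 1) := by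
  simpa using (hasStrictFDerivAt_exp_zero (𝕂 := 𝕂) (𝔸 := 𝔸)).continuousAt.tendsto

section Taylor

variable (𝕂 : Type*) [RCLike 𝕂] [NormedAlgebra 𝕂 𝔸]

theorem isBigO_exp_sub_sum_range (n : ℕ) :
    (fun x : 𝔸 => exp x - ∑ k ∈ range n, (k !⁻¹ : 𝕂) • x ^ k) =O[𝓝 0] fun x => ‖x‖ ^ n := by
  simpa [FormalMultilinearSeries.partialSum, expSeries_apply_eq] using
    (hasFPowerSeriesAt_exp_zero_of_radius_pos (expSeries_radius_pos 𝕂 𝔸)).isBigO_sub_partialSum_pow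
      n

theorem Asymptotics.IsBigO.exp_sub_sum_range {l : Filter α} {x : α → 𝔸} {g : α → ℝ}
    (hx : x =O[l] g) (hg : Tendsto g l (𝓝 0)) (n : ℕ) :
    (fun i => exp (x i) - ∑ k ∈ range n, (k !⁻¹ : 𝕂) • x i ^ k) =O[l] fun i => g i ^ n :=
  ((isBigO_exp_sub_sum_range 𝕂 n).comp_tendsto (hx.trans_tendsto hg)).trans (hx.norm_left.pow n)

end Taylor

theorem isBigO_exp_mul_exp_mul_exp_sub_exp (𝕂 : Type*) [RCLike 𝕂] [NormedAlgebra 𝕂 𝔸]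
    {l : Filter α} {x y : α → 𝔸} {g : α → ℝ}
    (hx : x =O[l] g) (hy : y =O[l] g) (hg : Tendsto g l (𝓝 0)) :
    (fun i => exp (x i) * exp (y i) * exp (x i) - exp (2 • x i + y i)) =O[l] fun i => g i ^ 3 := by
  have taylor := fun {z : α → 𝔸} (hz : z =O[l] g) (n : ℕ) => hz.exp_sub_sum_range 𝕂 hg n
  have hc : (fun i => 2 • x i + y i) =O[l] g := by
    simpa only [two_nsmul] using (hx.add hx).add hy
  have hσ : (fun i => exp (x i) - 1) =O[l] g := by simpa using taylor hx 1
  have hω : (fun i => exp (y i) - 1) =O[l] g := by simpa using taylor hy 1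
  have hσx : (fun i => (exp (x i) - 1) - x i) =O[l] fun i => g i ^ 2 := by
    simpa [sum_range_succ, sub_sub] using taylor hx 2
  have hωy : (fun i => (exp (y i) - 1) - y i) =O[l] fun i => g i ^ 2 := by
    simpa [sum_range_succ, sub_sub] using taylor hy 2
  have h3 : ∀ {z : α → 𝔸}, z =O[l] g →
      (fun i => exp (z i) - (1 + z i + (2 : 𝕂)⁻¹ • z i ^ 2)) =O[l] fun i => g i ^ 3 := fun hz => by
    simpa [sum_range_succ] using taylor hz 3
  -- With `σ = exp x - 1` and `ω = exp y - 1`, the difference is a sum of third-order Taylor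
  -- remainders and of the terms `σω - xy`, `ωσ - yx`, `σσ - xx`, `σωσ`, each of order `g³`.
  have hsum := ((((h3 hx).add (h3 hx)).add (h3 hy)).sub (h3 hc)).add
    (((isBigO_mul_sub_mul hσx hωy hω hx).add (isBigO_mul_sub_mul hωy hσx hσ hy)).add
      (isBigO_mul_sub_mul hσx hσx hσ hx)) |>.add
    (((hσ.mul hω).mul hσ).congr_right fun i => by ring)
  refine hsum.congr_left fun i => ?_
  generalize exp (x i) = a, exp (y i) = b, exp (2 • x i + y i) = e
  simp only [pow_two, add_mul, mul_add, smul_mul_assoc, mul_smul_comm, smul_add, sub_mul, mul_sub,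
    one_mul, mul_one]
  module

section LocalLog

variable (𝕂 : Type*) [RCLike 𝕂] [NormedAlgebra 𝕂 𝔸]

/-- A logarithm near `1`; away from a neighbourhood of `1` its values are meaningless. -/
noncomputable def localLog : 𝔸 → 𝔸 :=
  HasStrictFDerivAt.localInverse exp (ContinuousLinearEquiv.refl 𝕂 𝔸) 0 hasStrictFDerivAt_exp_zero

theorem eventually_exp_localLog : ∀ᶠ y in 𝓝 (1 : 𝔸), exp (localLog 𝕂 y) = y := by
  simpa [localLog] using
    (hasStrictFDerivAt_exp_zero (𝕂 := 𝕂) (𝔸 := 𝔸)).eventually_right_inverse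
      (f' := ContinuousLinearEquiv.refl 𝕂 𝔸)

theorem eventually_localLog_exp : ∀ᶠ x in 𝓝 (0 : 𝔸), localLog 𝕂 (exp x) = x :=
  (hasStrictFDerivAt_exp_zero (𝕂 := 𝕂) (𝔸 := 𝔸)).eventually_left_inverse
    (f' := ContinuousLinearEquiv.refl 𝕂 𝔸)

theorem isBigO_localLog_sub :
    (fun p : 𝔸 × 𝔸 => localLog 𝕂 p.1 - localLog 𝕂 p.2) =O[𝓝 (1, 1)] fun p => p.1 - p.2 := by
  simpa [localLog] using
    (hasStrictFDerivAt_exp_zero (𝕂 := 𝕂) (𝔸 := 𝔸)).to_localInverse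
      (f' := ContinuousLinearEquiv.refl 𝕂 𝔸) |>.isBigO_sub

theorem isBigO_localLog_sub_of_isBigO {l : Filter α} {Q c : α → 𝔸} {k : α → ℝ}
    (hQ : Tendsto Q l (𝓝 1)) (hc : Tendsto c l (𝓝 0))
    (h : (fun i => Q i - exp (c i)) =O[l] k) :
    (fun i => localLog 𝕂 (Q i) - c i) =O[l] k := by
  have hpair := hQ.prodMk_nhds ((tendsto_exp_nhds_zero_one 𝕂).comp hc)
  refine (((isBigO_localLog_sub 𝕂).comp_tendsto hpair).trans h).congr' ?_ EventuallyEq.rfl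
  filter_upwards [hc.eventually (eventually_localLog_exp 𝕂)] with i hi
  simp only [Function.comp_apply, hi]

end LocalLog

section Strang

variable (𝕂 : Type*) [RCLike 𝕂] [NormedAlgebra 𝕂 𝔸] (A B : 𝔸)

theorem tendsto_strangProduct : Tendsto (strangProduct 𝕂 A B) atTop (𝓝 1) := by
  have hexp := tendsto_exp_nhds_zero_one 𝕂 (𝔸 := 𝔸)
  have hx := (tendsto_inv_atTop_nhds_zero_nat (𝕜 := 𝕂)).smul_const ((2 : 𝕂)⁻¹ • A)
  have hy := (tendsto_inv_atTop_nhds_zero_nat (𝕜 := 𝕂)).smul_const B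
  rw [zero_smul] at hx hy
  have h := ((hexp.comp hx).mul (hexp.comp hy)).mul (hexp.comp hx)
  rw [mul_one, mul_one] at h
  exact h.congr fun N => (strangProduct_eq 𝕂 A B N).symm

theorem isBigO_strangProduct_sub_exp :
    (fun N => strangProduct 𝕂 A B N - exp ((N : 𝕂)⁻¹ • (A + B))) =O[atTop]
      fun N => (N : ℝ)⁻¹ ^ 3 := by
  refine (isBigO_exp_mul_exp_mul_exp_sub_exp 𝕂 (isBigO_inv_natCast_smul 𝕂 ((2 : 𝕂)⁻¹ • A))
    (isBigO_inv_natCast_smul 𝕂 B) tendsto_inv_atTop_nhds_zero_nat).congr_left fun N => ?_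
  rw [strangProduct_eq]
  congr 2
  module

theorem exists_strangProduct_pow_eq_exp :
    ∃ E : ℕ → 𝔸, (∀ᶠ N in atTop, strangProduct 𝕂 A B N ^ N = exp (A + B + E N)) ∧
      (fun N => ‖E N‖) =O[atTop] fun N => 1 / (N : ℝ) ^ 2 := by
  have hc : Tendsto (fun N : ℕ => (N : 𝕂)⁻¹ • (A + B)) atTop (𝓝 0) := by
    simpa only [zero_smul] using (tendsto_inv_atTop_nhds_zero_nat (𝕜 := 𝕂)).smul_const (A + B)
  have hlog := isBigO_localLog_sub_of_isBigO 𝕂 (tendsto_strangProduct 𝕂 A B) hc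
    (isBigO_strangProduct_sub_exp 𝕂 A B)
  refine ⟨fun N => (N : 𝕂) • localLog 𝕂 (strangProduct 𝕂 A B N) - (A + B), ?_, ?_⟩
  · filter_upwards [(tendsto_strangProduct 𝕂 A B).eventually (eventually_exp_localLog 𝕂)]
      with N hN
    -- `exp` does not depend on the `ℚ`-algebra structure, so the `ℚ`-algebra lemma applies.
    let : NormedAlgebra ℚ 𝔸 := NormedAlgebra.restrictScalars ℚ 𝕂 𝔸
    rw [add_sub_cancel, Nat.cast_smul_eq_nsmul, exp_nsmul, hN]
  · have hE : ∀ᶠ N : ℕ in atTop,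
        (N : ℝ) * ‖localLog 𝕂 (strangProduct 𝕂 A B N) - (N : 𝕂)⁻¹ • (A + B)‖
          = ‖(N : 𝕂) • localLog 𝕂 (strangProduct 𝕂 A B N) - (A + B)‖ := by
      filter_upwards [eventually_ne_atTop 0] with N hN
      rw [← RCLike.norm_natCast (K := 𝕂), ← norm_smul, smul_sub,
        smul_inv_smul₀ (Nat.cast_ne_zero.2 hN)]
    refine ((isBigO_refl (fun N : ℕ => (N : ℝ)) atTop).mul hlog.norm_left).congr' hE ?_
    filter_upwards [eventually_ne_atTop 0] with N hN
    field_simp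

end Strang

end BanachAlgebra

open Filter Asymptotics in
/-- Symmetric (Strang) splitting: for all large `N`,
`(exp(A/(2N)) exp(B/N) exp(A/(2N)))^N = exp(A + B + E_N)` with `‖E_N‖ = O(1/N²)`. -/
theorem strang_splitting (d : ℕ) (A B : Matrix (Fin d) (Fin d) ℂ) :
    ∃ E : ℕ → Matrix (Fin d) (Fin d) ℂ,
      (∀ᶠ N : ℕ in atTop,
        (NormedSpace.exp ((2 * (N : ℂ))⁻¹ • A) * NormedSpace.exp ((N : ℂ)⁻¹ • B) *
            NormedSpace.exp ((2 * (N : ℂ))⁻¹ • A)) ^ N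
          = NormedSpace.exp (A + B + E N)) ∧
      (fun N : ℕ => ‖E N‖) =O[atTop] fun N : ℕ => 1 / (N : ℝ) ^ 2 :=
  exists_strangProduct_pow_eq_exp ℂ A B
end

section
/- Write exp(ε·X)·exp(t·Y)·exp(ε·X) in the quaternions with X = i, Y = i·cos(α)+j·sin(α) as a + bX + cY + dZ where Z = sin(α)·k. Then d = 0, a = cos(2ε)cos(t) - cos(α)sin(2ε)sin(t), b = sin(2ε)cos(t) - 2cos(α)sin²(ε)sin(t), and c = sin(t). -/
open scoped Quaternion

def qi : ℍ[ℝ] := ⟨0, 1, 0, 0⟩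
def qj : ℍ[ℝ] := ⟨0, 0, 1, 0⟩
def qk : ℍ[ℝ] := ⟨0, 0, 0, 1⟩

/-!
Both `X` and `Y` square to `-1`, so `exp (ε • X) = cos ε + sin ε • X` and
`exp (t • Y) = cos t + sin t • Y`. Expanding the product then only uses `X * X = -1` and the
anticommutator `X * Y + Y * X = -2 cos α`, which gives `X * Y * X = Y - 2 cos α • X`.
-/

open Real

lemma Real.sin_abs_div_abs_mul (r : ℝ) : sin |r| / |r| * r = sin r := by
  rcases abs_choice r with h | h <;> rw [h]
  · exact div_mul_cancel_of_imp fun hr => by rw [hr, sin_zero]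
  · rw [sin_neg, neg_div_neg_eq]
    exact div_mul_cancel_of_imp fun hr => by rw [hr, sin_zero]

namespace Quaternion

lemma re_eq_zero_of_mul_self_eq_neg_one {u : ℍ[ℝ]} (h : u * u = -1) : u.re = 0 := by
  have hre := congrArg (·.re) h
  have hi := congrArg (·.imI) h
  have hj := congrArg (·.imJ) h
  have hk := congrArg (·.imK) h
  simp only [re_mul, imI_mul, imJ_mul, imK_mul, re_neg, imI_neg, imJ_neg, imK_neg, re_one,
    imI_one, imJ_one, imK_one] at hre hi hj hk
  nlinarith [sq_nonneg u.re, sq_nonneg u.imI, sq_nonneg u.imJ, sq_nonneg u.imK]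

lemma norm_eq_one_of_mul_self_eq_neg_one {u : ℍ[ℝ]} (h : u * u = -1) : ‖u‖ = 1 := by
  have hre := congrArg (·.re) h
  simp only [re_mul, re_neg, re_one, re_eq_zero_of_mul_self_eq_neg_one h] at hre
  have hsq : ‖u‖ * ‖u‖ = 1 := by
    rw [← normSq_eq_norm_mul_self, normSq_def', re_eq_zero_of_mul_self_eq_neg_one h]
    linarith
  exact (mul_self_eq_one_iff.mp hsq).resolve_right (by linarith [norm_nonneg u])

theorem exp_smul_of_mul_self_eq_neg_one {u : ℍ[ℝ]} (h : u * u = -1) (r : ℝ) :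
    NormedSpace.exp (r • u) = algebraMap ℝ ℍ[ℝ] (cos r) + sin r • u := by
  rw [exp_of_re_eq_zero _ (by simp [re_eq_zero_of_mul_self_eq_neg_one h]), norm_smul,
    norm_eq_one_of_mul_self_eq_neg_one h, mul_one, Real.norm_eq_abs, cos_abs, smul_smul,
    sin_abs_div_abs_mul, algebraMap_def]

end Quaternion

theorem sandwich_cos_add_sin_smul {A : Type*} [Ring A] [Algebra ℝ A] {X Y : A} {κ : ℝ}
    (hX : X * X = -1) (hXY : X * Y + Y * X = algebraMap ℝ A (-2 * κ)) (ε t : ℝ) :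
    (algebraMap ℝ A (cos ε) + sin ε • X) * (algebraMap ℝ A (cos t) + sin t • Y) *
        (algebraMap ℝ A (cos ε) + sin ε • X)
      = algebraMap ℝ A (cos (2 * ε) * cos t - κ * sin (2 * ε) * sin t)
        + (sin (2 * ε) * cos t - 2 * κ * sin ε ^ 2 * sin t) • X + sin t • Y := by
  simp only [Algebra.algebraMap_eq_smul_one] at hXY ⊢
  have hXYX : X * Y * X = Y - (2 * κ) • X := by
    have hXY' := congrArg (X * ·) hXY
    simp only [mul_add, ← mul_assoc, hX, mul_smul_comm, mul_one, neg_one_mul] at hXY'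
    linear_combination (norm := module) hXY'
  have hε (v : A) : (sin ε ^ 2 + cos ε ^ 2) • v = v := by rw [sin_sq_add_cos_sq, one_smul]
  simp only [add_mul, mul_add, one_mul, mul_one, mul_smul_comm, smul_mul_assoc, hX, hXYX]
  rw [cos_two_mul, sin_two_mul]
  linear_combination (norm := module)
    (cos ε * sin ε * sin t) • hXY - cos t • hε 1 + sin t • hε Y

section

attribute [local simp] Quaternion.re_mul Quaternion.imI_mul Quaternion.imJ_mul Quaternion.imK_mul

@[simp] lemma qi_re : qi.re = 0 := rfl
@[simp] lemma qi_imI : qi.imI = 1 := rfl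
@[simp] lemma qi_imJ : qi.imJ = 0 := rfl
@[simp] lemma qi_imK : qi.imK = 0 := rfl
@[simp] lemma qj_re : qj.re = 0 := rfl
@[simp] lemma qj_imI : qj.imI = 0 := rfl
@[simp] lemma qj_imJ : qj.imJ = 1 := rfl
@[simp] lemma qj_imK : qj.imK = 0 := rfl

lemma qi_mul_self : qi * qi = -1 := by
  ext <;> simp

lemma cos_smul_qi_add_sin_smul_qj_mul_self (α : ℝ) :
    (cos α • qi + sin α • qj) * (cos α • qi + sin α • qj) = -1 := by
  ext <;> simp
  · linear_combination -sin_sq_add_cos_sq α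
  · ring

lemma qi_mul_add_mul_qi (α : ℝ) :
    qi * (cos α • qi + sin α • qj) + (cos α • qi + sin α • qj) * qi
      = algebraMap ℝ ℍ[ℝ] (-2 * cos α) := by
  ext <;> simp
  ring

end

theorem exp_eX_exp_tY_exp_eX_general (α : ℝ) (ε t : ℝ) :
    let X : ℍ[ℝ] := qi
    let Y : ℍ[ℝ] := Real.cos α • qi + Real.sin α • qj
    let Z : ℍ[ℝ] := Real.sin α • qk
    NormedSpace.exp (ε • X) * NormedSpace.exp (t • Y) * NormedSpace.exp (ε • X)
      = ((Real.cos (2 * ε) * Real.cos t - Real.cos α * Real.sin (2 * ε) * Real.sin t : ℝ)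
          : ℍ[ℝ])
        + (Real.sin (2 * ε) * Real.cos t
            - 2 * Real.cos α * Real.sin ε ^ 2 * Real.sin t) • X
        + Real.sin t • Y + (0 : ℝ) • Z := by
  intro X Y Z
  rw [Quaternion.exp_smul_of_mul_self_eq_neg_one qi_mul_self,
    Quaternion.exp_smul_of_mul_self_eq_neg_one (cos_smul_qi_add_sin_smul_qj_mul_self α),
    sandwich_cos_add_sin_smul qi_mul_self (qi_mul_add_mul_qi α), zero_smul, add_zero,
    Quaternion.algebraMap_def]

/-- Writing `exp(ε X) exp(t Y) exp(ε X) = a + b X + c Y + d Z` in the basis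
`{1, X, Y, Z}` (with `X = i`, `Y = i cos α + j sin α`, `Z = sin α • k`), one has
`d = 0`, `a = cos 2ε cos t - cos α sin 2ε sin t`,
`b = sin 2ε cos t - 2 cos α sin² ε sin t`, `c = sin t`. -/
theorem exp_eX_exp_tY_exp_eX (α : ℝ) (h0 : 0 < α) (hπ : α < Real.pi) (ε t : ℝ) :
    let X : ℍ[ℝ] := qi
    let Y : ℍ[ℝ] := Real.cos α • qi + Real.sin α • qj
    let Z : ℍ[ℝ] := Real.sin α • qk
    NormedSpace.exp (ε • X) * NormedSpace.exp (t • Y) * NormedSpace.exp (ε • X)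
      = ((Real.cos (2 * ε) * Real.cos t - Real.cos α * Real.sin (2 * ε) * Real.sin t : ℝ)
          : ℍ[ℝ])
        + (Real.sin (2 * ε) * Real.cos t
            - 2 * Real.cos α * Real.sin ε ^ 2 * Real.sin t) • X
        + Real.sin t • Y + (0 : ℝ) • Z :=
  exp_eX_exp_tY_exp_eX_general α ε t
end
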